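/- Let (a_k), (b_k), (c_k), (d_k), (x_k), (y_k) be real sequences with a_k d_k - b_k c_k = 1, a_k → 1, d_k → 1, b_k → 0, c_k → 0, x_k → 0, y_k → 0, and y_k ≠ 0 for all k. Fix 0 < δ < 1 and set t_k = δ/|y_k| and f_k = (t_k a_k - b_k)/(d_k - t_k c_k). If |c_k| ≤ |y_k| for all k, then: (a) |t_k c_k| ≤ δ for all k, so every limit point of d_k - t_k c_k lies in [1-δ, 1+δ]; and (b) every limit point of (a_k x_k + b_k y_k) + f_k (c_k x_k + d_k y_k) lies in [-δ/(1-δ), -δ/(1+δ)] ∪ [δ/(1+δ), δ/(1-δ)]. -/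
import Mathlib


open Filter Topology

theorem stmt_3 (a b c d x y : ℕ → ℝ) (δ : ℝ)
    (hdet : ∀ k, a k * d k - b k * c k = 1)
    (ha : Tendsto a atTop (𝓝 1)) (hd : Tendsto d atTop (𝓝 1))
    (hb : Tendsto b atTop (𝓝 0)) (hc : Tendsto c atTop (𝓝 0))
    (hx : Tendsto x atTop (𝓝 0)) (hy : Tendsto y atTop (𝓝 0))
    (hy0 : ∀ k, y k ≠ 0)
    (hδ0 : 0 < δ) (hδ1 : δ < 1)
    (t : ℕ → ℝ) (ht : ∀ k, t k = δ / |y k|)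
    (hden : ∀ k, d k - t k * c k ≠ 0)
    (f : ℕ → ℝ) (hf : ∀ k, f k = (t k * a k - b k) / (d k - t k * c k))
    (hcy : ∀ k, |c k| ≤ |y k|) :
    (∀ k, |t k * c k| ≤ δ) ∧
    (∀ L : ℝ, MapClusterPt L atTop (fun k => d k - t k * c k) →
      L ∈ Set.Icc (1 - δ) (1 + δ)) ∧
    (∀ L : ℝ, MapClusterPt L atTop
        (fun k => (a k * x k + b k * y k) + f k * (c k * x k + d k * y k)) →
      L ∈ Set.Icc (-δ / (1 - δ)) (-δ / (1 + δ)) ∪ Set.Icc (δ / (1 + δ)) (δ / (1 - δ))) := by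
  have hta : ∀ k, |t k * c k| ≤ δ := by
    intro k
    have hy' : 0 < |y k| := abs_pos.mpr (hy0 k)
    rw [ht, abs_mul, abs_div, abs_abs, abs_of_pos hδ0, div_mul_eq_mul_div,
      div_le_iff₀ hy']
    nlinarith [hcy k]
  -- helper: along any ultrafilter ≤ atTop, t*c converges to some τ ∈ [-δ, δ]
  have htc_lim : ∀ U : Ultrafilter ℕ, (U : Filter ℕ) ≤ atTop →
      ∃ τ ∈ Set.Icc (-δ) δ, Tendsto (fun k => t k * c k) U (𝓝 τ) := by
    intro U hU
    have hmem : ∀ k, t k * c k ∈ Set.Icc (-δ) δ := fun k => abs_le.mp (hta k)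
    have hle : (U.map (fun k => t k * c k) : Filter ℝ) ≤ 𝓟 (Set.Icc (-δ) δ) :=
      le_principal_iff.mpr (Filter.mem_map.mpr (Filter.univ_mem' hmem))
    obtain ⟨τ, hτ, hτU⟩ := (isCompact_Icc).ultrafilter_le_nhds _ hle
    exact ⟨τ, hτ, hτU⟩
  refine ⟨hta, ?_, ?_⟩
  · intro L hL
    obtain ⟨U, hU, hgU⟩ := mapClusterPt_iff_ultrafilter.mp hL
    obtain ⟨τ, hτ, hτU⟩ := htc_lim U hU
    have hdU : Tendsto d U (𝓝 1) := hd.mono_left hU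
    have : Tendsto (fun k => d k - t k * c k) U (𝓝 (1 - τ)) := hdU.sub hτU
    have hLτ : L = 1 - τ := tendsto_nhds_unique hgU this
    exact ⟨by rw [hLτ]; linarith [hτ.2], by rw [hLτ]; linarith [hτ.1]⟩
  · intro L hL
    have key : (fun k => (a k * x k + b k * y k) + f k * (c k * x k + d k * y k))
        = fun k => (x k + t k * y k) / (d k - t k * c k) := by
      funext k
      rw [hf, div_mul_eq_mul_div, eq_div_iff (hden k), add_mul,
        div_mul_cancel₀ _ (hden k)]
      linear_combination (x k + t k * y k) * hdet k
    rw [key] at hL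
    obtain ⟨U, hU, hgU⟩ := mapClusterPt_iff_ultrafilter.mp hL
    obtain ⟨τ, hτ, hτU⟩ := htc_lim U hU
    -- t*y takes values in {-δ, δ}
    have hty : ∀ k, t k * y k ∈ ({-δ, δ} : Set ℝ) := by
      intro k
      rw [ht]
      rcases (hy0 k).lt_or_gt with h | h
      · left
        rw [abs_of_neg h, div_neg, neg_mul, div_mul_cancel₀ _ (hy0 k)]
      · right
        rw [abs_of_pos h, div_mul_cancel₀ _ (hy0 k)]
        exact rfl
    have hfin : IsCompact ({-δ, δ} : Set ℝ) := (Set.toFinite _).isCompact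
    have hle : (U.map (fun k => t k * y k) : Filter ℝ) ≤ 𝓟 ({-δ, δ} : Set ℝ) :=
      le_principal_iff.mpr (Filter.mem_map.mpr (Filter.univ_mem' hty))
    obtain ⟨σ, hσ, hσU⟩ := hfin.ultrafilter_le_nhds _ hle
    simp only [Set.mem_insert_iff, Set.mem_singleton_iff] at hσ
    have hσU' : Tendsto (fun k => t k * y k) U (𝓝 σ) := hσU
    have hnum : Tendsto (fun k => x k + t k * y k) U (𝓝 (0 + σ)) :=
      (hx.mono_left hU).add hσU'
    have hden1 : Tendsto (fun k => d k - t k * c k) U (𝓝 (1 - τ)) :=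
      (hd.mono_left hU).sub hτU
    have h1τ : (1 : ℝ) - τ ≠ 0 := by
      have := hτ.2; intro h; nlinarith
    have hglim : Tendsto (fun k => (x k + t k * y k) / (d k - t k * c k)) U
        (𝓝 ((0 + σ) / (1 - τ))) := hnum.div hden1 h1τ
    have hLσ : L = (0 + σ) / (1 - τ) := tendsto_nhds_unique hgU hglim
    rw [zero_add] at hLσ
    have h1τ0 : (0 : ℝ) < 1 - τ := by nlinarith [hτ.2]
    rcases hσ with h | h
    · left
      subst hLσ
      rw [h]
      constructor
      · rw [div_le_div_iff₀ (by linarith) h1τ0]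
        nlinarith [hτ.1, hτ.2]
      · rw [div_le_div_iff₀ h1τ0 (by linarith)]
        nlinarith [hτ.1, hτ.2]
    · right
      subst hLσ
      rw [h]
      constructor
      · rw [div_le_div_iff₀ (by linarith) h1τ0]
        nlinarith [hτ.1, hτ.2]
      · rw [div_le_div_iff₀ h1τ0 (by linarith)]
        nlinarith [hτ.1, hτ.2]
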